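/- For the PSD square root R of ÛᵀÛ where Û = U*Σ*W + E as above, the smallest singular value satisfies σ_min(R) ≥ σ_min(Σ*)·σ_min(W) − ‖Σ*‖₂·‖E(Σ*)⁻¹‖₂. -/

import Mathlib

open Matrix

/-- Spectral (operator) norm of a real matrix. -/
noncomputable def sNorm {n r : ℕ} (A : Matrix (Fin n) (Fin r) ℝ) : ℝ :=
  ‖(LinearMap.toContinuousLinearMap (Matrix.toEuclideanLin A))‖

/-- Smallest singular value of a real matrix. -/
noncomputable def sMin {n r : ℕ} (A : Matrix (Fin n) (Fin r) ℝ) : ℝ :=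
  ⨅ x : Metric.sphere (0 : EuclideanSpace ℝ (Fin r)) 1, ‖Matrix.toEuclideanLin A x‖

/-! Since `Rᵀ R = Ûᵀ Û`, the matrices `R` and `Û` have the same smallest singular value. The
isometry `U*` does not change `σ_min`, `σ_min` is supermultiplicative, and by Weyl's inequality
`σ_min (A + B) ≥ σ_min A - ‖B‖₂`; finally `‖E‖₂ ≤ ‖Σ*‖₂ ‖E Σ*⁻¹‖₂` because `E = (E Σ*⁻¹) Σ*`. -/

open scoped Matrix.Norms.L2Operator RealInnerProductSpace

section SingularValueBounds

variable {m n r : ℕ}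

lemma toEuclideanLin_mul_apply (A : Matrix (Fin m) (Fin n) ℝ) (B : Matrix (Fin n) (Fin r) ℝ)
    (x : EuclideanSpace ℝ (Fin r)) :
    toEuclideanLin (A * B) x = toEuclideanLin A (toEuclideanLin B x) := by
  simp [toLpLin_apply, mulVec_mulVec]

lemma sNorm_eq_norm (A : Matrix (Fin n) (Fin r) ℝ) : sNorm A = ‖A‖ := rfl

lemma norm_toEuclideanLin_le (A : Matrix (Fin n) (Fin r) ℝ) (x : EuclideanSpace ℝ (Fin r)) :
    ‖toEuclideanLin A x‖ ≤ sNorm A * ‖x‖ :=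
  (LinearMap.toContinuousLinearMap (toEuclideanLin A)).le_opNorm x

lemma sNorm_mul_le (A : Matrix (Fin m) (Fin n) ℝ) (B : Matrix (Fin n) (Fin r) ℝ) :
    sNorm (A * B) ≤ sNorm A * sNorm B :=
  l2_opNorm_mul A B

lemma sNorm_le_sNorm_mul_sNorm_mul_inv (E : Matrix (Fin n) (Fin r) ℝ)
    {S : Matrix (Fin r) (Fin r) ℝ} (hS : IsUnit S.det) :
    sNorm E ≤ sNorm S * sNorm (E * S⁻¹) := by
  have hE : E = E * S⁻¹ * S := by rw [Matrix.mul_assoc, nonsing_inv_mul S hS, Matrix.mul_one]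
  calc sNorm E = sNorm (E * S⁻¹ * S) := by rw [← hE]
    _ ≤ sNorm (E * S⁻¹) * sNorm S := sNorm_mul_le _ _
    _ = sNorm S * sNorm (E * S⁻¹) := mul_comm _ _

lemma sMin_nonneg (A : Matrix (Fin n) (Fin r) ℝ) : 0 ≤ sMin A :=
  Real.iInf_nonneg fun _ => norm_nonneg _

lemma sMin_eq_zero_of_isEmpty [IsEmpty (Metric.sphere (0 : EuclideanSpace ℝ (Fin r)) 1)]
    (A : Matrix (Fin n) (Fin r) ℝ) : sMin A = 0 := by
  rw [sMin, iInf_of_isEmpty, Real.sInf_empty]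

lemma sMin_le_norm (A : Matrix (Fin n) (Fin r) ℝ) {x : EuclideanSpace ℝ (Fin r)}
    (hx : ‖x‖ = 1) : sMin A ≤ ‖toEuclideanLin A x‖ :=
  ciInf_le ⟨0, by rintro _ ⟨y, rfl⟩; exact norm_nonneg _⟩
    (⟨x, mem_sphere_zero_iff_norm.mpr hx⟩ : Metric.sphere (0 : EuclideanSpace ℝ (Fin r)) 1)

lemma le_sMin [Nonempty (Metric.sphere (0 : EuclideanSpace ℝ (Fin r)) 1)]
    {A : Matrix (Fin n) (Fin r) ℝ} {c : ℝ}
    (h : ∀ x : EuclideanSpace ℝ (Fin r), ‖x‖ = 1 → c ≤ ‖toEuclideanLin A x‖) : c ≤ sMin A :=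
  le_ciInf fun x => h x (mem_sphere_zero_iff_norm.mp x.2)

lemma sMin_mul_norm_le (A : Matrix (Fin n) (Fin r) ℝ) (x : EuclideanSpace ℝ (Fin r)) :
    sMin A * ‖x‖ ≤ ‖toEuclideanLin A x‖ := by
  rcases eq_or_ne x 0 with rfl | hx
  · simp
  have hx' : ‖x‖ ≠ 0 := norm_ne_zero_iff.mpr hx
  have hunit : ‖‖x‖⁻¹ • x‖ = 1 := by rw [norm_smul, norm_inv, norm_norm, inv_mul_cancel₀ hx']
  have := sMin_le_norm A hunit
  rwa [map_smul, norm_smul, norm_inv, norm_norm, le_inv_mul_iff₀ (by positivity), mul_comm]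
    at this

lemma sMin_mul_sMin_le_sMin_mul (A : Matrix (Fin m) (Fin n) ℝ) (B : Matrix (Fin n) (Fin r) ℝ) :
    sMin A * sMin B ≤ sMin (A * B) := by
  rcases isEmpty_or_nonempty (Metric.sphere (0 : EuclideanSpace ℝ (Fin r)) 1) with _ | _
  · simp [sMin_eq_zero_of_isEmpty]
  refine le_sMin fun x hx => ?_
  rw [toEuclideanLin_mul_apply]
  calc sMin A * sMin B ≤ sMin A * ‖toEuclideanLin B x‖ :=
        mul_le_mul_of_nonneg_left (sMin_le_norm B hx) (sMin_nonneg A)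
    _ ≤ _ := sMin_mul_norm_le A _

lemma sMin_sub_sNorm_le_sMin_add (A B : Matrix (Fin n) (Fin r) ℝ) :
    sMin A - sNorm B ≤ sMin (A + B) := by
  rcases isEmpty_or_nonempty (Metric.sphere (0 : EuclideanSpace ℝ (Fin r)) 1) with _ | _
  · simp [sMin_eq_zero_of_isEmpty, sNorm_eq_norm]
  refine le_sMin fun x hx => ?_
  have hA := sMin_le_norm A hx
  have hB := norm_toEuclideanLin_le B x
  have := norm_sub_norm_le (toEuclideanLin A x) (-toEuclideanLin B x)
  rw [map_add, LinearMap.add_apply]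
  simp only [sub_neg_eq_add, norm_neg, hx, mul_one] at this hB
  linarith

lemma norm_toEuclideanLin_sq (A : Matrix (Fin n) (Fin r) ℝ) (x : EuclideanSpace ℝ (Fin r)) :
    ‖toEuclideanLin A x‖ ^ 2 = ⟪x, toEuclideanLin (Aᵀ * A) x⟫ := by
  rw [← real_inner_self_eq_norm_sq, toEuclideanLin_mul_apply,
    ← conjTranspose_eq_transpose_of_trivial, toEuclideanLin_conjTranspose_eq_adjoint, LinearMap.adjoint_inner_right]

lemma norm_toEuclideanLin_eq_of_transpose_mul_self_eq {A : Matrix (Fin m) (Fin r) ℝ}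
    {B : Matrix (Fin n) (Fin r) ℝ} (h : Aᵀ * A = Bᵀ * B) (x : EuclideanSpace ℝ (Fin r)) :
    ‖toEuclideanLin A x‖ = ‖toEuclideanLin B x‖ := by
  have := norm_toEuclideanLin_sq A x
  rw [h, ← norm_toEuclideanLin_sq] at this
  exact (pow_left_inj₀ (norm_nonneg _) (norm_nonneg _) two_ne_zero).mp this

lemma sMin_eq_of_transpose_mul_self_eq {A : Matrix (Fin m) (Fin r) ℝ}
    {B : Matrix (Fin n) (Fin r) ℝ} (h : Aᵀ * A = Bᵀ * B) : sMin A = sMin B := by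
  simp only [sMin, norm_toEuclideanLin_eq_of_transpose_mul_self_eq h]

lemma sMin_mul_of_transpose_mul_self_eq_one {U : Matrix (Fin m) (Fin n) ℝ} (hU : Uᵀ * U = 1)
    (A : Matrix (Fin n) (Fin r) ℝ) : sMin (U * A) = sMin A :=
  sMin_eq_of_transpose_mul_self_eq <| by
    rw [transpose_mul, Matrix.mul_assoc, ← Matrix.mul_assoc Uᵀ, hU, Matrix.one_mul]

end SingularValueBounds

theorem stmt2_general {n r : ℕ}
    (Ustar : Matrix (Fin n) (Fin r) ℝ) (S W : Matrix (Fin r) (Fin r) ℝ)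
    (E : Matrix (Fin n) (Fin r) ℝ)
    (hUstar : Ustarᵀ * Ustar = 1)
    (hSinv : IsUnit S.det)
    (Uhat : Matrix (Fin n) (Fin r) ℝ) (hUhat : Uhat = Ustar * S * W + E)
    (R : Matrix (Fin r) (Fin r) ℝ)
    (hRpsd : R.PosSemidef) (hR2 : R * R = Uhatᵀ * Uhat) :
    sMin S * sMin W - sNorm S * sNorm (E * S⁻¹) ≤ sMin R := by
  have hRT : Rᵀ = R := by rw [← conjTranspose_eq_transpose_of_trivial, hRpsd.isHermitian.eq]
  have hRU : sMin R = sMin Uhat := sMin_eq_of_transpose_mul_self_eq (by rw [hRT, hR2])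
  calc sMin S * sMin W - sNorm S * sNorm (E * S⁻¹) ≤ sMin (S * W) - sNorm E :=
        sub_le_sub (sMin_mul_sMin_le_sMin_mul S W) (sNorm_le_sNorm_mul_sNorm_mul_inv E hSinv)
    _ = sMin (Ustar * S * W) - sNorm E := by
        rw [Matrix.mul_assoc, sMin_mul_of_transpose_mul_self_eq_one hUstar]
    _ ≤ sMin Uhat := hUhat ▸ sMin_sub_sNorm_le_sMin_add _ _
    _ = sMin R := hRU.symm

theorem stmt2 {n r : ℕ}
    (Ustar : Matrix (Fin n) (Fin r) ℝ) (S W : Matrix (Fin r) (Fin r) ℝ)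
    (E : Matrix (Fin n) (Fin r) ℝ)
    (hUstar : Ustarᵀ * Ustar = 1)
    (hdiag : S.IsDiag) (hSinv : IsUnit S.det)
    (Uhat : Matrix (Fin n) (Fin r) ℝ) (hUhat : Uhat = Ustar * S * W + E)
    (R : Matrix (Fin r) (Fin r) ℝ)
    (hRpsd : R.PosSemidef) (hR2 : R * R = Uhatᵀ * Uhat) :
    sMin S * sMin W - sNorm S * sNorm (E * S⁻¹) ≤ sMin R :=
  stmt2_general Ustar S W E hUstar hSinv Uhat hUhat R hRpsd hR2
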